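/- arXiv:1412.5193 — 3 statements merged into one kernel-verified Lean document; each statement's English description precedes it below -/
import Mathlib

section
/- Let A be a skew PBW extension of a ring R with respect to x₁,…,xₙ. Then for all α, β ∈ ℕⁿ there exist unique elements c_{α,β} ∈ R and p_{α,β} ∈ A such that x^α x^β = c_{α,β} x^{α+β} + p_{α,β}, where c_{α,β} is left invertible in R and p_{α,β} = 0 or deg(p_{α,β}) < |α+β| := (α₁+β₁)+⋯+(αₙ+βₙ). -/
/-- The standard monomial `x₁^{α₁} ⋯ xₙ^{αₙ}`, the factors taken in increasing index order. -/
def xmon {A : Type} [Ring A] {n : ℕ} (x : Fin n → A) (α : Fin n → ℕ) : A :=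
  ((List.finRange n).map (fun i => x i ^ α i)).prod

/-- `A` is a skew PBW extension of the subring `S ⊆ A` with respect to `x₁,…,xₙ`. -/
structure IsSkewPBWExt {A : Type} [Ring A] {n : ℕ} (S : Subring A) (x : Fin n → A) : Prop where
  linearIndependent : LinearIndependent S (xmon x)
  spans : Submodule.span S (Set.range (xmon x)) = ⊤
  comm_coeff : ∀ (i : Fin n) (r : A), r ∈ S → r ≠ 0 →
    ∃ c ∈ S, c ≠ 0 ∧ x i * r - c * x i ∈ S
  comm_vars : ∀ i j : Fin n, ∃ c ∈ S, c ≠ 0 ∧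
    x j * x i - c * (x i * x j) ∈ Submodule.span S (insert (1 : A) (Set.range x))

/-- The `S`-span of the standard monomials of total degree `< N`.  An element `p ∈ A` satisfies
`p = 0` or `deg p < N` precisely when `p` lies in this submodule. -/
def lowMon {A : Type} [Ring A] {n : ℕ} (S : Subring A) (x : Fin n → A) (N : ℕ) :
    Submodule S A :=
  Submodule.span S (xmon x '' {α : Fin n → ℕ | (∑ i, α i) < N})

/-!
Write `F_N` (`lowMon S x N`) for the `S`-span of the standard monomials of degree `< N`, and
say that `a` has leading monomial `x^δ` if `a = c x^δ + p` with `c ∈ S` left invertible and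
`p ∈ F_{|δ|}`.

The commutation coefficients preserve left invertibility: if `u r = 1` and
`x_i r = c x_i + d`, then expanding `x_i = x_i u r` and comparing coefficients of `x_i` (linear
independence of the monomials) gives a left inverse of `c`; likewise composing the relations
for `x_i x_j` and `x_j x_i` gives a left inverse of `c_{i,j}`. By induction on `|γ|`, `x_i x^γ`
has leading monomial `x^{γ+e_i}`: if `i` does not exceed the first variable of
`x^γ = x_j x^{γ'}` this is an identity, and otherwise one commutes `x_i` past `x_j`, using the
induction hypothesis for `x_i x^{γ'}` and for the filtration estimate `x_j F_N ⊆ F_{N+1}`.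
Peeling the factors of `x^α` off one at a time then gives the leading monomial `x^{α+β}` of
`x^α x^β`, and linear independence makes the decomposition unique.
-/

lemma Submodule.mul_mem_of_mem_span {R A : Type*} [Semiring R] [Semiring A] [Module R A]
    [IsScalarTower R A A] {M : Submodule R A} {s : Set A} {b : A} (h : ∀ a ∈ s, a * b ∈ M)
    {l : A} (hl : l ∈ Submodule.span R s) : l * b ∈ M := by
  induction hl using Submodule.span_induction with
  | mem a ha => exact h a ha
  | zero => simp
  | add a a' _ _ ha ha' => simpa [add_mul] using M.add_mem ha ha'
  | smul r a _ ha => simpa [smul_mul_assoc] using M.smul_mem r ha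

namespace SkewPBW

variable {A : Type} [Ring A] {n : ℕ}

lemma xmon_succ (x : Fin (n + 1) → A) (γ : Fin (n + 1) → ℕ) :
    xmon x γ = x 0 ^ γ 0 * xmon (fun k => x k.succ) (fun k => γ k.succ) := by
  simp only [xmon, ← List.ofFn_eq_map, List.ofFn_succ, List.prod_cons]

lemma x_mul_xmon_of_forall_lt (x : Fin n → A) (i : Fin n) (γ : Fin n → ℕ)
    (hγ : ∀ k < i, γ k = 0) : x i * xmon x γ = xmon x (γ + Pi.single i 1) := by
  induction n with
  | zero => exact i.elim0
  | succ n ih =>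
    rw [xmon_succ, xmon_succ]
    induction i using Fin.cases with
    | zero =>
      simp only [Pi.add_apply, Pi.single_eq_same, pow_succ', ← mul_assoc]
      congr 2
    | succ i =>
      have h0 : γ 0 = 0 := hγ 0 (Fin.succ_pos i)
      have := ih (fun k => x k.succ) i (fun k => γ k.succ)
        (fun k hk => hγ _ (Fin.succ_lt_succ_iff.2 hk))
      have hhead : (γ + Pi.single i.succ 1 : Fin (n + 1) → ℕ) 0 = 0 := by simp [h0]
      have htail : (fun k => (γ + Pi.single i.succ 1 : Fin (n + 1) → ℕ) k.succ) =
          (fun k => γ k.succ) + Pi.single i 1 := by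
        funext k
        simp [Pi.single_apply]
      rw [h0, hhead, htail, pow_zero, one_mul, one_mul, this]

lemma xmon_zero (x : Fin n → A) : xmon x 0 = 1 :=
  List.prod_eq_one (by simp)

lemma xmon_single (x : Fin n → A) (i : Fin n) : xmon x (Pi.single i 1) = x i := by
  simpa [xmon_zero] using (x_mul_xmon_of_forall_lt x i 0 fun _ _ => rfl).symm

lemma xmon_single_add_single (x : Fin n → A) {j i : Fin n} (hji : j < i) :
    xmon x (Pi.single j 1 + Pi.single i 1) = x j * x i := by
  rw [← xmon_single x i, x_mul_xmon_of_forall_lt x j _ fun k hk =>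
    Pi.single_eq_of_ne (hk.trans hji).ne 1, add_comm]

lemma exists_eq_add_single_of_ne_zero {γ : Fin n → ℕ} {j₀ : Fin n} (h : γ j₀ ≠ 0) :
    ∃ j ≤ j₀, ∃ γ' : Fin n → ℕ, γ = γ' + Pi.single j 1 ∧ ∀ k < j, γ' k = 0 := by
  classical
  set T := Finset.univ.filter (γ · ≠ 0)
  have hT : T.Nonempty := ⟨j₀, by simpa [T] using h⟩
  have hmin : ∀ k < T.min' hT, γ k = 0 := fun k hk => by
    by_contra hk0
    exact (T.min'_le k (by simpa [T] using hk0)).not_gt hk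
  have hj : γ (T.min' hT) ≠ 0 := by simpa [T] using T.min'_mem hT
  refine ⟨T.min' hT, T.min'_le j₀ (by simpa [T] using h), γ - Pi.single (T.min' hT) 1, ?_,
    fun k hk => by simp [hmin k hk]⟩
  funext k
  by_cases hk : k = T.min' hT
  · subst hk
    simp only [Pi.add_apply, Pi.sub_apply, Pi.single_eq_same]
    omega
  · simp [Pi.single_eq_of_ne hk]

lemma sum_add_single (γ : Fin n → ℕ) (i : Fin n) :
    ∑ k, (γ + Pi.single i 1 : Fin n → ℕ) k = ∑ k, γ k + 1 := by
  simp [Finset.sum_add_distrib]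

variable {S : Subring A} {x : Fin n → A}

lemma xmon_mem_lowMon {γ : Fin n → ℕ} {N : ℕ} (h : ∑ k, γ k < N) :
    xmon x γ ∈ lowMon S x N :=
  Submodule.subset_span ⟨γ, h, rfl⟩

lemma lowMon_mono {N M : ℕ} (h : N ≤ M) : lowMon S x N ≤ lowMon S x M :=
  Submodule.span_mono (Set.image_mono fun _ hγ => lt_of_lt_of_le hγ h)

lemma coe_mul_mem_lowMon (r : S) {p : A} {N : ℕ} (hp : p ∈ lowMon S x N) :
    (r : A) * p ∈ lowMon S x N :=
  Submodule.smul_mem _ r hp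

lemma coe_mem_lowMon_one (r : S) : (r : A) ∈ lowMon S x 1 := by
  simpa [xmon_zero] using coe_mul_mem_lowMon r (xmon_mem_lowMon (x := x) (γ := 0) (by simp))

lemma span_one_x_le_lowMon_two : Submodule.span S (insert 1 (Set.range x)) ≤ lowMon S x 2 := by
  refine Submodule.span_le.2 ?_
  rintro _ (rfl | ⟨k, rfl⟩)
  · simpa [xmon_zero] using xmon_mem_lowMon (S := S) (x := x) (γ := 0) (by simp)
  · simpa [xmon_single] using xmon_mem_lowMon (S := S) (x := x) (γ := Pi.single k 1) (by simp)

lemma eq_zero_of_mul_xmon_mem_lowMon (hA : IsSkewPBWExt S x) {c : S} {δ : Fin n → ℕ}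
    (h : (c : A) * xmon x δ ∈ lowMon S x (∑ k, δ k)) : c = 0 := by
  refine linearIndependent_iff_eq_zero_of_smul_mem_span.mp hA.linearIndependent δ c ?_
  refine Submodule.span_mono (Set.image_mono ?_) h
  rintro γ hγ
  refine ⟨trivial, fun hγδ => ?_⟩
  rw [Set.mem_singleton_iff.1 hγδ] at hγ
  exact lt_irrefl (∑ k, δ k) hγ

lemma exists_x_mul_coe_eq (hA : IsSkewPBWExt S x) (i : Fin n) (r : S) :
    ∃ c d : S, x i * r = c * x i + d := by
  by_cases hr : (r : A) = 0
  · exact ⟨0, 0, by simp [hr]⟩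
  obtain ⟨c, hc, -, hd⟩ := hA.comm_coeff i r r.2 hr
  exact ⟨⟨c, hc⟩, ⟨_, hd⟩, (add_sub_cancel _ _).symm⟩

lemma exists_x_mul_coe_eq_of_mul_eq_one (hA : IsSkewPBWExt S x) (i : Fin n) {u r : S}
    (hu : u * r = 1) : ∃ c d : S, (∃ v : S, v * c = 1) ∧ x i * r = c * x i + d := by
  obtain ⟨c, d, hr⟩ := exists_x_mul_coe_eq hA i r
  obtain ⟨c', d', hu'⟩ := exists_x_mul_coe_eq hA i u
  refine ⟨c, d, ⟨c', sub_eq_zero.1 ?_⟩, hr⟩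
  refine eq_zero_of_mul_xmon_mem_lowMon hA (δ := Pi.single i 1) ?_
  -- `x i = x i * u * r`, expanded with both commutation rules
  have key : ((c' * c - 1 : S) : A) * xmon x (Pi.single i 1) =
      ((-(c' * d + d' * r) : S) : A) := by
    have hur : (u : A) * r = 1 := by rw [← Subring.coe_mul, hu, Subring.coe_one]
    push_cast
    calc ((c' : A) * c - 1) * xmon x (Pi.single i 1)
        = c' * (c * x i + d) - x i * u * r - c' * d := by
          rw [xmon_single, mul_assoc (x i), hur]; noncomm_ring
      _ = c' * (x i * r) - (c' * x i + d') * r - c' * d := by rw [hr, hu']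
      _ = -(c' * d + d' * r) := by noncomm_ring
  rw [key, show ∑ k, (Pi.single i 1 : Fin n → ℕ) k = 1 by simp]
  exact coe_mem_lowMon_one _

lemma exists_x_mul_x_eq (hA : IsSkewPBWExt S x) {j i : Fin n} (hji : j < i) :
    ∃ q : S, (∃ v : S, v * q = 1) ∧
      ∃ l ∈ Submodule.span S (insert 1 (Set.range x)), x i * x j = q * (x j * x i) + l := by
  obtain ⟨q, hq, -, hl⟩ := hA.comm_vars j i
  obtain ⟨q', hq', -, hl'⟩ := hA.comm_vars i j
  refine ⟨⟨q, hq⟩, ⟨⟨q', hq'⟩, sub_eq_zero.1 (eq_zero_of_mul_xmon_mem_lowMon hA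
    (δ := Pi.single j 1 + Pi.single i 1) ?_)⟩, _, hl, (add_sub_cancel _ _).symm⟩
  have key : ((⟨q', hq'⟩ * ⟨q, hq⟩ - 1 : S) : A) * xmon x (Pi.single j 1 + Pi.single i 1) =
      -(q' * (x i * x j - q * (x j * x i)) + (x j * x i - q' * (x i * x j))) := by
    push_cast
    rw [xmon_single_add_single x hji]
    noncomm_ring
  rw [key]
  refine neg_mem (add_mem (coe_mul_mem_lowMon ⟨q', hq'⟩ ?_) ?_) <;>
    refine lowMon_mono (by simp [Finset.sum_add_distrib]) (span_one_x_le_lowMon_two ?_) <;>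
    assumption

variable (S x) in
def HasLeadingMonomial (a : A) (δ : Fin n → ℕ) : Prop :=
  ∃ c : S, (∃ u : S, u * c = 1) ∧ ∃ p ∈ lowMon S x (∑ k, δ k), a = c * xmon x δ + p

lemma hasLeadingMonomial_xmon (δ : Fin n → ℕ) : HasLeadingMonomial S x (xmon x δ) δ :=
  ⟨1, ⟨1, one_mul 1⟩, 0, zero_mem _, by simp⟩

namespace HasLeadingMonomial

variable {a : A} {δ : Fin n → ℕ}

lemma mem_lowMon (h : HasLeadingMonomial S x a δ) : a ∈ lowMon S x (∑ k, δ k + 1) := by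
  obtain ⟨c, -, p, hp, rfl⟩ := h
  exact add_mem (coe_mul_mem_lowMon c (xmon_mem_lowMon (Nat.lt_succ_self _)))
    (lowMon_mono (Nat.le_succ _) hp)

lemma coe_mul {c : S} (hc : ∃ u : S, u * c = 1) (h : HasLeadingMonomial S x a δ) :
    HasLeadingMonomial S x (c * a) δ := by
  obtain ⟨c', ⟨u', hu'⟩, p, hp, rfl⟩ := h
  obtain ⟨u, hu⟩ := hc
  refine ⟨c * c', ⟨u' * u, ?_⟩, c * p, coe_mul_mem_lowMon c hp, by push_cast; noncomm_ring⟩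
  rw [mul_assoc, ← mul_assoc u, hu, one_mul, hu']

lemma add_of_mem_lowMon (h : HasLeadingMonomial S x a δ) {p : A}
    (hp : p ∈ lowMon S x (∑ k, δ k)) : HasLeadingMonomial S x (a + p) δ := by
  obtain ⟨c, hc, p', hp', rfl⟩ := h
  exact ⟨c, hc, p' + p, add_mem hp' hp, add_assoc _ _ _⟩

lemma x_mul (hA : IsSkewPBWExt S x) {j : Fin n} (h : HasLeadingMonomial S x a δ)
    (hδ : HasLeadingMonomial S x (x j * xmon x δ) (δ + Pi.single j 1))
    (hlow : ∀ p ∈ lowMon S x (∑ k, δ k), x j * p ∈ lowMon S x (∑ k, δ k + 1)) :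
    HasLeadingMonomial S x (x j * a) (δ + Pi.single j 1) := by
  obtain ⟨c, ⟨u, hu⟩, p, hp, rfl⟩ := h
  obtain ⟨c', d, hc', hxc⟩ := exists_x_mul_coe_eq_of_mul_eq_one hA j hu
  have hrest : (d : A) * xmon x δ + x j * p ∈
      lowMon S x (∑ k, (δ + Pi.single j 1 : Fin n → ℕ) k) := by
    rw [sum_add_single]
    exact add_mem (coe_mul_mem_lowMon d (xmon_mem_lowMon (Nat.lt_succ_self _))) (hlow p hp)
  have hsplit : x j * (c * xmon x δ + p) =
      c' * (x j * xmon x δ) + (d * xmon x δ + x j * p) := by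
    rw [mul_add, ← mul_assoc, hxc]; noncomm_ring
  rw [hsplit]
  exact (hδ.coe_mul hc').add_of_mem_lowMon hrest

end HasLeadingMonomial

lemma x_mul_mem_lowMon_of_forall_xmon (hA : IsSkewPBWExt S x) (j : Fin n) {N : ℕ}
    (h : ∀ γ : Fin n → ℕ, ∑ k, γ k < N → x j * xmon x γ ∈ lowMon S x (∑ k, γ k + 2))
    {p : A} (hp : p ∈ lowMon S x N) : x j * p ∈ lowMon S x (N + 1) := by
  induction hp using Submodule.span_induction with
  | mem a ha =>
    obtain ⟨γ, hγ, rfl⟩ := ha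
    exact lowMon_mono (Nat.succ_le_succ hγ) (h γ hγ)
  | zero => simp
  | add a b _ _ ha hb => simpa [mul_add] using add_mem ha hb
  | smul r a ha hxa =>
    obtain ⟨c, d, hr⟩ := exists_x_mul_coe_eq hA j r
    have hsplit : x j * (r • a) = c * (x j * a) + d * a := by
      rw [Subring.smul_def, smul_eq_mul, ← mul_assoc, hr]; noncomm_ring
    rw [hsplit]
    exact add_mem (coe_mul_mem_lowMon c hxa) (coe_mul_mem_lowMon d (lowMon_mono (by omega) ha))

theorem hasLeadingMonomial_x_mul_xmon (hA : IsSkewPBWExt S x) (i : Fin n) (γ : Fin n → ℕ) :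
    HasLeadingMonomial S x (x i * xmon x γ) (γ + Pi.single i 1) := by
  induction hm : ∑ k, γ k using Nat.strong_induction_on generalizing i γ with
  | _ m ih =>
  by_cases hγ : ∀ k < i, γ k = 0
  · rw [x_mul_xmon_of_forall_lt x i γ hγ]
    exact hasLeadingMonomial_xmon _
  push Not at hγ
  obtain ⟨k₀, hk₀i, hk₀⟩ := hγ
  obtain ⟨j, hjk₀, γ', rfl, hγ'⟩ := exists_eq_add_single_of_ne_zero hk₀
  have hji : j < i := hjk₀.trans_lt hk₀i
  rw [sum_add_single] at hm
  have ih' (k : Fin n) : HasLeadingMonomial S x (x k * xmon x γ') (γ' + Pi.single k 1) :=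
    ih _ (by omega) k γ' rfl
  have hlow (p : A) (hp : p ∈ lowMon S x m) : x j * p ∈ lowMon S x (m + 1) :=
    x_mul_mem_lowMon_of_forall_xmon hA j (fun δ hδ => by
      simpa only [sum_add_single] using (ih _ hδ j δ rfl).mem_lowMon) hp
  -- `x i * x^γ = x i * x j * x^γ'`; now commute `x i` past `x j`
  obtain ⟨q, hq, l, hl, hxx⟩ := exists_x_mul_x_eq hA hji
  have hsplit : x i * xmon x (γ' + Pi.single j 1) =
      q * (x j * (x i * xmon x γ')) + l * xmon x γ' := by
    rw [← x_mul_xmon_of_forall_lt x j γ' hγ', ← mul_assoc, hxx]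
    noncomm_ring
  have hlead : HasLeadingMonomial S x (x j * xmon x (γ' + Pi.single i 1))
      (γ' + Pi.single i 1 + Pi.single j 1) := by
    rw [x_mul_xmon_of_forall_lt]
    · exact hasLeadingMonomial_xmon _
    · intro k hk
      simp [hγ' k hk, Pi.single_eq_of_ne (hk.trans hji).ne]
  have hl' : l * xmon x γ' ∈ lowMon S x (m + 1) := by
    refine Submodule.mul_mem_of_mem_span ?_ hl
    rintro _ (rfl | ⟨k, rfl⟩)
    · exact (one_mul (xmon x γ')).symm ▸ xmon_mem_lowMon (γ := γ') (by omega)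
    · simpa only [sum_add_single, hm] using (ih' k).mem_lowMon
  rw [hsplit, add_right_comm γ']
  refine (((ih' i).x_mul hA hlead ?_).coe_mul hq).add_of_mem_lowMon ?_
  · simpa only [sum_add_single, hm] using hlow
  · simpa only [sum_add_single, hm] using hl'

lemma x_mul_mem_lowMon (hA : IsSkewPBWExt S x) (j : Fin n) {N : ℕ} {p : A}
    (hp : p ∈ lowMon S x N) : x j * p ∈ lowMon S x (N + 1) :=
  x_mul_mem_lowMon_of_forall_xmon hA j (fun γ _ => by
    simpa only [sum_add_single] using (hasLeadingMonomial_x_mul_xmon hA j γ).mem_lowMon) hp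

theorem hasLeadingMonomial_xmon_mul_xmon (hA : IsSkewPBWExt S x) (α β : Fin n → ℕ) :
    HasLeadingMonomial S x (xmon x α * xmon x β) (α + β) := by
  induction hm : ∑ k, α k using Nat.strong_induction_on generalizing α with
  | _ m ih =>
  by_cases hα : α = 0
  · simpa [hα, xmon_zero] using hasLeadingMonomial_xmon β
  obtain ⟨j₀, hj₀⟩ := Function.ne_iff.1 hα
  obtain ⟨j, -, α', rfl, hα'⟩ := exists_eq_add_single_of_ne_zero hj₀
  rw [sum_add_single] at hm
  rw [← x_mul_xmon_of_forall_lt x j α' hα', mul_assoc, add_right_comm]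
  exact (ih _ (by omega) α' rfl).x_mul hA (hasLeadingMonomial_x_mul_xmon hA j _)
    (fun _ => x_mul_mem_lowMon hA j)

lemma eq_of_mul_xmon_add_eq (hA : IsSkewPBWExt S x) {δ : Fin n → ℕ} {c c' : S} {p p' : A}
    (hp : p ∈ lowMon S x (∑ k, δ k)) (hp' : p' ∈ lowMon S x (∑ k, δ k))
    (h : c * xmon x δ + p = c' * xmon x δ + p') : c = c' ∧ p = p' := by
  have hc : c - c' = 0 := by
    refine eq_zero_of_mul_xmon_mem_lowMon hA (δ := δ) ?_
    have : ((c - c' : S) : A) * xmon x δ = p' - p := by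
      push_cast
      rw [sub_mul, sub_eq_sub_iff_add_eq_add, h, add_comm]
    exact this ▸ sub_mem hp' hp
  obtain rfl := sub_eq_zero.1 hc
  exact ⟨rfl, add_left_cancel h⟩

end SkewPBW

/-- For all `α, β ∈ ℕⁿ` there exist unique elements `c_{α,β} ∈ R` and `p_{α,β} ∈ A` such that
`x^α x^β = c_{α,β} x^{α+β} + p_{α,β}`, where `c_{α,β}` is left invertible and `p_{α,β} = 0` or
`deg p_{α,β} < |α+β|`. -/
theorem skewPBW_monomial_product {A : Type} [Ring A] {n : ℕ}
    (S : Subring A) (x : Fin n → A) (hA : IsSkewPBWExt S x) (α β : Fin n → ℕ) :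
    ∃! cp : S × A, (∃ u : S, u * cp.1 = 1) ∧ cp.2 ∈ lowMon S x (∑ i, (α i + β i)) ∧
      xmon x α * xmon x β = (cp.1 : A) * xmon x (α + β) + cp.2 := by
  obtain ⟨c, hc, p, hp, hprod⟩ := SkewPBW.hasLeadingMonomial_xmon_mul_xmon hA α β
  refine ⟨(c, p), ⟨hc, hp, hprod⟩, ?_⟩
  rintro ⟨c', p'⟩ ⟨-, hp', hprod'⟩
  obtain ⟨rfl, rfl⟩ := SkewPBW.eq_of_mul_xmon_add_eq hA hp' hp (hprod'.symm.trans hprod)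
  rfl
end

section
/- Let A be a skew PBW extension of a ring R with respect to x₁,…,xₙ, and for all 1 ≤ i,j ≤ n write x_j xᵢ = c_{ij} xᵢ x_j + a_{ij}^{(1)} x₁ + ⋯ + a_{ij}^{(n)} xₙ + d_{ij} with c_{ij}, a_{ij}^{(k)}, d_{ij} ∈ R (these elements are uniquely determined since Mon(A) is an R-basis). Then for all 1 ≤ i < j ≤ n: c_{ji} c_{ij} = 1 (so c_{ji} is a right inverse of c_{ij}, univocally determined), a_{ji}^{(k)} = −c_{ji} a_{ij}^{(k)} for every 1 ≤ k ≤ n, and d_{ji} = −c_{ji} d_{ij}. -/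
/-!
Substituting the relation for `x_j xᵢ` into the relation for `xᵢ x_j` gives
`0 = (c_{ji} c_{ij} - 1) xᵢ x_j + ∑ₖ (c_{ji} a_{ij}^{(k)} + a_{ji}^{(k)}) xₖ + (c_{ji} d_{ij} + d_{ji})`.
For `i < j` the monomials `xᵢ x_j`, `xₖ` and `1` are distinct elements of the left `R`-basis
`Mon(A)`, so all three coefficients vanish.
-/

theorem List.prod_map_eq_mul_of_pairwise_lt {M ι : Type} [Monoid M] [Preorder ι] [DecidableEq ι]
    (f : ι → M) {l : List ι} (hl : l.Pairwise (· < ·)) {i j : ι} (hi : i ∈ l) (hj : j ∈ l)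
    (hij : i < j) (hf : ∀ m ∈ l, m ≠ i → m ≠ j → f m = 1) :
    (l.map f).prod = f i * f j := by
  induction l with
  | nil => simp at hi
  | cons hd t ih =>
    obtain ⟨hlt, ht⟩ := List.pairwise_cons.mp hl
    rcases List.mem_cons.mp hi with rfl | hit
    · have hjt : j ∈ t := (List.mem_cons.mp hj).resolve_left hij.ne'
      rw [List.map_cons, List.prod_cons, List.prod_map_eq_pow_single j f
        (fun m hmj hmt => hf m (List.mem_cons_of_mem _ hmt) (hlt m hmt).ne' hmj),
        List.count_eq_one_of_mem ht.nodup hjt, pow_one]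
    · have hjt : j ∈ t := (List.mem_cons.mp hj).resolve_left ((hlt i hit).trans hij).ne'
      rw [List.map_cons, List.prod_cons,
        hf hd List.mem_cons_self (hlt i hit).ne ((hlt i hit).trans hij).ne, one_mul]
      exact ih ht hit hjt fun m hm => hf m (List.mem_cons_of_mem _ hm)

section Monomials

variable {A : Type} [Ring A] {n : ℕ} (x : Fin n → A)

theorem xmon_zero : xmon x 0 = 1 := by
  simp [xmon]

theorem xmon_single (k : Fin n) : xmon x (Pi.single k 1) = x k := by
  rw [xmon, List.prod_map_eq_pow_single k _ (fun m hm _ => by simp [hm]),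
    List.count_eq_one_of_mem (List.nodup_finRange n) (List.mem_finRange k)]
  simp

theorem xmon_single_add_single {i j : Fin n} (hij : i < j) :
    xmon x (Pi.single i 1 + Pi.single j 1) = x i * x j := by
  rw [xmon, List.prod_map_eq_mul_of_pairwise_lt _ (List.pairwise_lt_finRange n)
    (List.mem_finRange i) (List.mem_finRange j) hij
    (fun m _ hmi hmj => by simp [hmi, hmj])]
  simp [hij.ne, hij.ne']

end Monomials

def degLeTwoExponent {n : ℕ} (i j : Fin n) : Option (Option (Fin n)) → Fin n → ℕ
  | none => 0
  | some none => Pi.single i 1 + Pi.single j 1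
  | some (some k) => Pi.single k 1

theorem degLeTwoExponent_injective {n : ℕ} (i j : Fin n) :
    Function.Injective (degLeTwoExponent i j) := by
  intro s t hst
  -- the total degrees `0`, `2`, `1` separate the three kinds of exponents
  have hdeg := congrArg (fun α : Fin n → ℕ => ∑ k, α k) hst
  rcases s with _ | _ | k <;> rcases t with _ | _ | l <;>
    simp [degLeTwoExponent, Finset.sum_add_distrib] at hdeg ⊢
  simpa [degLeTwoExponent, Pi.single_apply, eq_comm] using congrFun hst k

theorem LinearIndependent.coeffs_eq_zero_of_xmon_deg_le_two {A : Type} [Ring A] {n : ℕ}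
    {S : Subring A} {x : Fin n → A} (hx : LinearIndependent S (xmon x)) {i j : Fin n}
    (hij : i < j) {r s : S} {t : Fin n → S}
    (h : (r : A) * (x i * x j) + ∑ k, (t k : A) * x k + s = 0) :
    r = 0 ∧ (∀ k, t k = 0) ∧ s = 0 := by
  let g : Option (Option (Fin n)) → S := fun o => o.elim s fun o => o.elim r t
  have hg : ∑ o, g o • xmon x (degLeTwoExponent i j o) = 0 := by
    simp only [Fintype.sum_option, degLeTwoExponent, xmon_zero, xmon_single,
      xmon_single_add_single x hij, Subring.smul_def, smul_eq_mul, mul_one, g, Option.elim]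
    rw [← h]
    abel
  have hzero := Fintype.linearIndependent_iff.mp
    (hx.comp _ (degLeTwoExponent_injective i j)) g hg
  exact ⟨hzero (some none), fun k => hzero (some (some k)), hzero none⟩

/-- If `x_j xᵢ = c_{ij} xᵢ x_j + a_{ij}^{(1)} x₁ + ⋯ + a_{ij}^{(n)} xₙ + d_{ij}` for all `i, j`,
then for `i < j`: `c_{ji} c_{ij} = 1`, `a_{ji}^{(k)} = −c_{ji} a_{ij}^{(k)}` and
`d_{ji} = −c_{ji} d_{ij}`. -/
theorem skewPBW_parameters_relations {A : Type} [Ring A] {n : ℕ}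
    (S : Subring A) (x : Fin n → A) (hA : IsSkewPBWExt S x)
    (c d : Fin n → Fin n → S) (a : Fin n → Fin n → Fin n → S)
    (hrel : ∀ i j : Fin n,
      x j * x i = (c i j : A) * (x i * x j) + (∑ k, (a i j k : A) * x k) + (d i j : A))
    (i j : Fin n) (hij : i < j) :
    c j i * c i j = 1 ∧ (∀ k, a j i k = - (c j i * a i j k)) ∧ d j i = - (c j i * d i j) := by
  have hzero : ((c j i * c i j - 1 : S) : A) * (x i * x j)
      + ∑ k, ((c j i * a i j k + a j i k : S) : A) * x k + ((c j i * d i j + d j i : S) : A) = 0 :=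
    calc _ = (c j i : A) * ((c i j : A) * (x i * x j) + (∑ k, (a i j k : A) * x k) + d i j)
          + (∑ k, (a j i k : A) * x k) + d j i - x i * x j := by
          push_cast
          simp only [add_mul, sub_mul, mul_add, Finset.mul_sum, Finset.sum_add_distrib, mul_assoc,
            one_mul]
          abel
      _ = 0 := by rw [← hrel i j, ← hrel j i, sub_self]
  obtain ⟨hc, ha, hd⟩ := hA.linearIndependent.coeffs_eq_zero_of_xmon_deg_le_two hij hzero
  exact ⟨sub_eq_zero.mp hc, fun k => eq_neg_of_add_eq_zero_right (ha k),
    eq_neg_of_add_eq_zero_right hd⟩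
end

section
/- Let R, I = {1,…,n}, X, σᵢ, δᵢ, c_{ij}, d_{ij}, a_{ij}^{(k)}, p, q, h, t be as in the reduction machinery, and assume conditions (1)–(3) hold: each σᵢ is a ring endomorphism of R, each δᵢ is a σᵢ-derivation, h(x_j xᵢ r) = h(p(x_j xᵢ) r) for i < j and r ∈ R, and h(x_k x_j xᵢ) = h(p(x_k x_j) xᵢ) for i < j < k. Then for all y, z ∈ ℤ⟨X ∪ R⟩ and all a ∈ ℤT, h(y a z) = h(y t(q(a)) z). -/
/-! ## The reduction machinery -/

/-- A letter is either a variable `xᵢ` (`Sum.inl i`) or an element of `R` (`Sum.inr r`). -/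
abbrev Ltr (R : Type) (n : ℕ) := Sum (Fin n) R

/-- `W` is the free monoid on the alphabet `X ∪ R`. -/
abbrev W (R : Type) (n : ℕ) := FreeMonoid (Ltr R n)

/-- The free `ℤ`-algebra `ℤ⟨X ∪ R⟩` on the alphabet `X ∪ R`. -/
abbrev FreeAlg (R : Type) (n : ℕ) := MonoidAlgebra ℤ (W R n)

variable {R : Type} [Ring R] {n : ℕ}

/-- The letter `xᵢ` as a word. -/
def xLtr (i : Fin n) : W R n := FreeMonoid.of (Sum.inl i)

/-- The letter `r ∈ R` as a word. -/
def rLtr (r : R) : W R n := FreeMonoid.of (Sum.inr r)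

/-- A word of `W`, viewed inside `ℤ⟨X ∪ R⟩`. -/
noncomputable def wd (w : W R n) : FreeAlg R n := MonoidAlgebra.of ℤ (W R n) w

/-- The number of inversions of a word involving only `x`'s. -/
def invX : List (Ltr R n) → ℕ
  | [] => 0
  | (Sum.inl j) :: rest =>
      (rest.countP (fun l => match l with | Sum.inl i => decide (i < j) | _ => false)) + invX rest
  | (Sum.inr _) :: rest => invX rest

/-- The number of inversions of a word of the type `(xᵢ, r)`. -/
def invXR : List (Ltr R n) → ℕ
  | [] => 0
  | (Sum.inl _) :: rest =>
      (rest.countP (fun l => match l with | Sum.inr _ => true | _ => false)) + invXR rest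
  | (Sum.inr _) :: rest => invXR rest

/-- `T` is the set of words with complexity `(a, 0, 0)`. -/
def MemT (w : W R n) : Prop := invX (FreeMonoid.toList w) = 0 ∧ invXR (FreeMonoid.toList w) = 0

/-- The list of `X`-letters of a word, in order. -/
def xPart (w : W R n) : List (Fin n) :=
  (FreeMonoid.toList w).filterMap (fun l => match l with | Sum.inl i => some i | _ => none)

/-- The ordered product of the `R`-letters of a word. -/
def rPart (w : W R n) : R :=
  ((FreeMonoid.toList w).filterMap (fun l => match l with | Sum.inr r => some r | _ => none)).prod

/-- `Mon` is the set of standard monomials `x_{i₁} ⋯ x_{i_m}`, `i₁ ≤ ⋯ ≤ i_m`. -/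
def Mon (n : ℕ) := {l : List (Fin n) // l.Pairwise (· ≤ ·)}

/-- `F_R(Mon)`, the free left `R`-module with basis `Mon`. -/
abbrev FRMon (R : Type) [Ring R] (n : ℕ) := Mon n →₀ R

open scoped Classical in
/-- The value of `q` on a word: `q(r₁ ⋯ r_m x_{i₁} ⋯ x_{i_k}) = (r₁ ⋯ r_m) • x_{i₁} ⋯ x_{i_k}`
(for words in `T`; the value on other words is irrelevant). -/
noncomputable def qWord (w : W R n) : FRMon R n :=
  if h : (xPart w).Pairwise (· ≤ ·) then Finsupp.single ⟨xPart w, h⟩ (rPart w) else 0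

/-- `t : F_R(Mon) → ℤ⟨X ∪ R⟩`, sending `Σ r_x̄ • x̄` to `Σ (r_x̄ x̄)` (the word consisting of the
`R`-letter `r_x̄` followed by the monomial `x̄`). -/
noncomputable def tmap (f : FRMon R n) : FreeAlg R n :=
  f.sum (fun m r => wd (FreeMonoid.ofList (Sum.inr r :: m.val.map Sum.inl)))

/-- The defining recursion (by induction on complexity) of the reduction map
`p : W → ℤ⟨X ∪ R⟩` associated with the data `σᵢ, δᵢ, c_{ij}, d_{ij}, a_{ij}^{(k)}`. -/
structure IsReduction (σ δ : Fin n → R → R) (c d : Fin n → Fin n → R)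
    (a : Fin n → Fin n → Fin n → R) (P : W R n → FreeAlg R n) : Prop where
  of_memT : ∀ w : W R n, MemT w → P w = wd w
  xr : ∀ (v₁ v₂ : W R n) (i : Fin n) (r : R), MemT (rLtr r * v₂) →
    P (v₁ * xLtr i * rLtr r * v₂) =
      P (v₁ * rLtr (σ i r) * xLtr i * v₂) + P (v₁ * rLtr (δ i r) * v₂)
  xx : ∀ (v₁ v₂ : W R n) (i j : Fin n), i < j → MemT (xLtr i * v₂) →
    P (v₁ * xLtr j * xLtr i * v₂) =
      P (v₁ * rLtr (c i j) * xLtr i * xLtr j * v₂) +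
      (∑ k, P (v₁ * rLtr (a i j k) * xLtr k * v₂)) + P (v₁ * rLtr (d i j) * v₂)

/-- Condition (1): each `σᵢ` is a ring endomorphism of `R` and each `δᵢ` is a
`σᵢ`-derivation. -/
def Cond1 (σ δ : Fin n → R → R) : Prop :=
  ∀ i : Fin n, σ i 1 = 1 ∧ (∀ r s, σ i (r + s) = σ i r + σ i s) ∧
    (∀ r s, σ i (r * s) = σ i r * σ i s) ∧
    (∀ r s, δ i (r + s) = δ i r + δ i s) ∧
    (∀ r s, δ i (r * s) = σ i r * δ i s + δ i r * s)

/-!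
Fix the words `l₁, l₂` around a word `m` of `R`-letters. By induction on the complexity of
`l₁ m l₂`, the value `h(l₁ m l₂)` is `g(∏ m)` for an additive `g`. Reductions inside `l₂` are
performed simultaneously for all `m`; when `l₂ ∈ T`, the last `X`-letter `xᵢ` of `l₁` is pushed
through `m`, which yields `σᵢ(∏ m) xᵢ + δᵢ(∏ m)` exactly because `σᵢ` is multiplicative and `δᵢ`
is a `σᵢ`-derivation. A word of `T` is `r₁ ⋯ rₘ` followed by a sorted monomial, so it may be
replaced by `(r₁ ⋯ rₘ) x̄ = t(q(w))` inside `h(y · z)`, and additivity of `g` extends this to `ℤT`.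
-/

namespace Cond1

variable {σ δ : Fin n → R → R}

theorem σ_one (h : Cond1 σ δ) (i : Fin n) : σ i 1 = 1 := (h i).1

theorem σ_mul (h : Cond1 σ δ) (i : Fin n) (r s : R) : σ i (r * s) = σ i r * σ i s :=
  (h i).2.2.1 r s

theorem δ_mul (h : Cond1 σ δ) (i : Fin n) (r s : R) :
    δ i (r * s) = σ i r * δ i s + δ i r * s :=
  (h i).2.2.2.2 r s

theorem δ_one (h : Cond1 σ δ) (i : Fin n) : δ i 1 = 0 := by
  simpa [h.σ_one] using h.δ_mul i 1 1

def σHom (h : Cond1 σ δ) (i : Fin n) : R →+ R := AddMonoidHom.mk' (σ i) (h i).2.1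

def δHom (h : Cond1 σ δ) (i : Fin n) : R →+ R := AddMonoidHom.mk' (δ i) (h i).2.2.2.1

@[simp] theorem coe_σHom (h : Cond1 σ δ) (i : Fin n) : ⇑(h.σHom i) = σ i := rfl

@[simp] theorem coe_δHom (h : Cond1 σ δ) (i : Fin n) : ⇑(h.δHom i) = δ i := rfl

end Cond1

open Sum

section Words

variable {α : Type}

theorem memT_ofList_iff {l : List (Ltr α n)} :
    MemT (FreeMonoid.ofList l) ↔
      ∃ (ρ : List α) (xs : List (Fin n)), xs.Pairwise (· ≤ ·) ∧ l = ρ.map inr ++ xs.map inl := by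
  simp only [MemT, FreeMonoid.toList_ofList]
  induction l with
  | nil => exact ⟨fun _ => ⟨[], [], .nil, rfl⟩, fun _ => ⟨rfl, rfl⟩⟩
  | cons x l ih =>
    rcases x with j | r
    · constructor
      · rintro ⟨hX, hXR⟩
        simp only [invX, invXR, Nat.add_eq_zero_iff] at hX hXR
        obtain ⟨ρ, xs, hxs, rfl⟩ := ih.1 ⟨hX.2, hXR.2⟩
        obtain rfl : ρ = [] := by simpa [List.countP_map, Function.comp_def] using hXR.1
        refine ⟨[], j :: xs, List.pairwise_cons.2 ⟨?_, hxs⟩, rfl⟩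
        simpa [List.countP_map, Function.comp_def] using hX.1
      · rintro ⟨_ | ⟨r, ρ⟩, _ | ⟨i, xs⟩, hxs, e⟩ <;> simp only [List.map_nil, List.map_cons,
          List.nil_append, List.cons_append, List.cons.injEq, reduceCtorEq, false_and,
          inl.injEq] at e
        obtain ⟨rfl, rfl⟩ := e
        obtain ⟨hX, hXR⟩ := ih.2 ⟨[], xs, hxs.of_cons, rfl⟩
        simp only [invX, invXR, hX, hXR]
        simpa [List.countP_map, Function.comp_def] using (List.pairwise_cons.1 hxs).1
    · simp only [invX, invXR, ih]
      constructor
      · rintro ⟨ρ, xs, hxs, rfl⟩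
        exact ⟨r :: ρ, xs, hxs, rfl⟩
      · rintro ⟨_ | ⟨r', ρ⟩, _ | ⟨i, xs⟩, hxs, e⟩ <;> simp only [List.map_nil, List.map_cons,
          List.nil_append, List.cons_append, List.cons.injEq, reduceCtorEq, false_and,
          inr.injEq] at e
        all_goals exact ⟨ρ, _, hxs, e.2⟩

theorem memT_ofList_map_inr_append (ρ : List α) {l : List (Ltr α n)}
    (hT : MemT (FreeMonoid.ofList l)) : MemT (FreeMonoid.ofList (ρ.map inr ++ l)) := by
  obtain ⟨ρ', xs, hxs, rfl⟩ := memT_ofList_iff.1 hT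
  exact memT_ofList_iff.2 ⟨ρ ++ ρ', xs, hxs, by simp⟩

theorem exists_pivot (l : List (Ltr α n)) :
    MemT (FreeMonoid.ofList l) ∨
    (∃ m j r rest, l = m ++ inl j :: inr r :: rest ∧ MemT (FreeMonoid.ofList (inr r :: rest))) ∨
    (∃ m j i rest, l = m ++ inl j :: inl i :: rest ∧ i < j ∧
      MemT (FreeMonoid.ofList (inl i :: rest))) := by
  induction l with
  | nil => exact .inl (memT_ofList_iff.2 ⟨[], [], .nil, rfl⟩)
  | cons x l ih =>
    rcases ih with hT | ⟨m, j, r, rest, rfl, hT⟩ | ⟨m, j, i, rest, rfl, hij, hT⟩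
    · obtain ⟨ρ, xs, hxs, rfl⟩ := memT_ofList_iff.1 hT
      rcases x with j | r
      · rcases ρ with _ | ⟨r, ρ⟩
        · rcases xs with _ | ⟨i, xs⟩
          · exact .inl (memT_ofList_iff.2 ⟨[], [j], by simp, rfl⟩)
          · by_cases hij : i < j
            · exact .inr (.inr ⟨[], j, i, xs.map inl, rfl, hij, hT⟩)
            · refine .inl (memT_ofList_iff.2 ⟨[], j :: i :: xs, ?_, rfl⟩)
              have hji : j ≤ i := le_of_not_gt hij
              refine List.pairwise_cons.2 ⟨fun k hk => ?_, hxs⟩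
              rcases List.mem_cons.1 hk with rfl | hk
              exacts [hji, hji.trans (List.rel_of_pairwise_cons hxs hk)]
        · exact .inr (.inl ⟨[], j, r, _, rfl, hT⟩)
      · exact .inl (memT_ofList_iff.2 ⟨r :: ρ, xs, hxs, rfl⟩)
    · exact .inr (.inl ⟨x :: m, j, r, rest, rfl, hT⟩)
    · exact .inr (.inr ⟨x :: m, j, i, rest, rfl, hij, hT⟩)

theorem invXR_cons_inl (j : Fin n) (l : List (Ltr α n)) :
    invXR (inl j :: l) = l.countP isRight + invXR l := by
  simp only [invXR]
  congr 1
  exact List.countP_congr (by rintro (_ | _) _ <;> simp)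

theorem invXR_cons_inr (r : α) (l : List (Ltr α n)) : invXR (inr r :: l) = invXR l := rfl

theorem invXR_map_inr (ρ : List α) : invXR (ρ.map inr : List (Ltr α n)) = 0 := by
  induction ρ <;> simp_all [invXR, invXR_cons_inr]

theorem invXR_append (A B : List (Ltr α n)) :
    invXR (A ++ B) = invXR A + invXR B + A.countP isLeft * B.countP isRight := by
  induction A with
  | nil => simp [invXR]
  | cons x A ih =>
    rcases x with j | r
    · simp [invXR_cons_inl, ih, List.countP_cons]
      ring
    · simp [invXR, ih]

/-- Ordering the `X`-part shortlex replaces the first two entries of the paper's complexity. -/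
def complexity (l : List (Ltr α n)) : List (Fin n) × ℕ := (l.filterMap getLeft?, invXR l)

def ComplexityLT : List (Ltr α n) → List (Ltr α n) → Prop :=
  InvImage (Prod.Lex (List.Shortlex (· < ·)) (· < ·)) complexity

theorem wellFounded_complexityLT : WellFounded (ComplexityLT (α := α) (n := n)) :=
  InvImage.wf _ (WellFounded.prod_lex (List.Shortlex.wf wellFounded_lt) wellFounded_lt)

theorem complexityLT_of_length_lt {l l' : List (Ltr α n)}
    (h : (l.filterMap getLeft?).length < (l'.filterMap getLeft?).length) : ComplexityLT l l' :=
  Prod.Lex.left _ _ (List.Shortlex.of_length_lt h)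

theorem complexityLT_swap (A B : List (Ltr α n)) (s : α) {i j : Fin n} (hij : i < j) :
    ComplexityLT (A ++ inr s :: inl i :: inl j :: B) (A ++ inl j :: inl i :: B) := by
  refine Prod.Lex.left _ _ ?_
  simp only [List.filterMap_append, List.filterMap_cons, getLeft?_inl, getLeft?_inr]
  exact (List.Shortlex.of_lex (by simp) (.rel hij)).append_left _

theorem complexityLT_move (A B : List (Ltr α n)) (s : α) (j : Fin n) {ρ : List α} (hρ : ρ ≠ []) :
    ComplexityLT (A ++ inr s :: inl j :: B) (A ++ inl j :: (ρ.map inr ++ B)) := by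
  have hρ : 0 < ρ.length := List.length_pos_iff.2 hρ
  refine Prod.lex_def.2 (.inr ⟨by simp [complexity, List.filterMap_cons, List.filterMap_map], ?_⟩)
  simp [complexity, invXR_append, invXR_cons_inl, invXR_cons_inr, invXR_map_inr, List.countP_map,
    List.countP_cons, Function.comp_def]
  nlinarith

theorem eq_map_inr_or_eq_append_inl_map_inr (l : List (Ltr α n)) :
    (∃ ρ : List α, l = ρ.map inr) ∨ ∃ u i, ∃ ρ : List α, l = u ++ inl i :: ρ.map inr := by
  induction l with
  | nil => exact .inl ⟨[], rfl⟩
  | cons x l ih =>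
    rcases ih with ⟨ρ, rfl⟩ | ⟨u, i, ρ, rfl⟩
    · rcases x with i | r
      · exact .inr ⟨[], i, ρ, rfl⟩
      · exact .inl ⟨r :: ρ, rfl⟩
    · exact .inr ⟨x :: u, i, ρ, rfl⟩

end Words

theorem qWord_ofList_map_inr_append {ρ : List R} {xs : List (Fin n)} (hxs : xs.Pairwise (· ≤ ·)) :
    qWord (FreeMonoid.ofList (ρ.map inr ++ xs.map inl)) =
      (Finsupp.single (⟨xs, hxs⟩ : Mon n) ρ.prod : FRMon R n) := by
  have hx : xPart (FreeMonoid.ofList (ρ.map inr ++ xs.map inl)) = xs := by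
    simp [xPart, List.filterMap_map]
  have hr : rPart (FreeMonoid.ofList (ρ.map inr ++ xs.map inl)) = ρ.prod := by
    simp [rPart, List.filterMap_map]
  simp only [qWord, hx, hr, dif_pos hxs]

section Reduction

variable {σ δ : Fin n → R → R} {c d : Fin n → Fin n → R} {a : Fin n → Fin n → Fin n → R}
  {P : W R n → FreeAlg R n} {Q : FreeAlg R n →ₗ[ℤ] FRMon R n}

variable (P Q) in
/-- `h = q ∘ p`, on words given by their list of letters. -/
noncomputable def hList (l : List (Ltr R n)) : FRMon R n := Q (P (FreeMonoid.ofList l))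

theorem IsReduction.hList_xr (hP : IsReduction σ δ c d a P) (l₁ l₂ : List (Ltr R n)) (i : Fin n)
    (r : R) (hT : MemT (FreeMonoid.ofList (inr r :: l₂))) :
    hList P Q (l₁ ++ inl i :: inr r :: l₂) =
      hList P Q (l₁ ++ inr (σ i r) :: inl i :: l₂) + hList P Q (l₁ ++ inr (δ i r) :: l₂) := by
  have := hP.xr (.ofList l₁) (.ofList l₂) i r hT
  simp only [xLtr, rLtr, mul_assoc] at this
  simp [hList, FreeMonoid.ofList_cons, this]

theorem IsReduction.hList_xx (hP : IsReduction σ δ c d a P) (l₁ l₂ : List (Ltr R n)) {i j : Fin n}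
    (hij : i < j) (hT : MemT (FreeMonoid.ofList (inl i :: l₂))) :
    hList P Q (l₁ ++ inl j :: inl i :: l₂) =
      hList P Q (l₁ ++ inr (c i j) :: inl i :: inl j :: l₂) +
        ∑ k, hList P Q (l₁ ++ inr (a i j k) :: inl k :: l₂) +
          hList P Q (l₁ ++ inr (d i j) :: l₂) := by
  have := hP.xx (.ofList l₁) (.ofList l₂) i j hij hT
  simp only [xLtr, rLtr, mul_assoc] at this
  simp [hList, FreeMonoid.ofList_cons, this]

variable (P Q) in
def HasProdFactorization (l₁ l₂ : List (Ltr R n)) : Prop :=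
  ∃ g : R →+ FRMon R n, ∀ m : List R, hList P Q (l₁ ++ m.map inr ++ l₂) = g m.prod

theorem hasProdFactorization_map_inr_of_memT (hP : IsReduction σ δ c d a P)
    (hQ : ∀ w, Q (wd w) = qWord w) (ρ : List R) {l₂ : List (Ltr R n)}
    (hT : MemT (FreeMonoid.ofList l₂)) : HasProdFactorization P Q (ρ.map inr) l₂ := by
  obtain ⟨ρ₂, xs, hxs, rfl⟩ := memT_ofList_iff.1 hT
  refine ⟨(Finsupp.singleAddHom ⟨xs, hxs⟩).comp
    ((AddMonoidHom.mulLeft ρ.prod).comp (AddMonoidHom.mulRight ρ₂.prod)), fun m => ?_⟩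
  have hnf : ρ.map inr ++ m.map inr ++ (ρ₂.map inr ++ xs.map inl) =
      (ρ ++ m ++ ρ₂).map inr ++ xs.map (inl : Fin n → Ltr R n) := by simp
  rw [hList, hnf, hP.of_memT _ (memT_ofList_iff.2 ⟨_, _, hxs, rfl⟩), hQ,
    qWord_ofList_map_inr_append hxs]
  simp only [List.prod_append, mul_assoc]
  rfl

theorem hList_inl_map_inr_append (hP : IsReduction σ δ c d a P) (h1 : Cond1 σ δ)
    {l₂ : List (Ltr R n)} (hT : MemT (FreeMonoid.ofList l₂)) (i : Fin n) (m : List R) :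
    ∀ (u : List (Ltr R n)) (g₁ g₂ : R →+ FRMon R n),
      (∀ m' : List R, hList P Q (u ++ m'.map inr ++ inl i :: l₂) = g₁ m'.prod) →
      (∀ m' : List R, hList P Q (u ++ m'.map inr ++ l₂) = g₂ m'.prod) →
      hList P Q (u ++ inl i :: (m.map inr ++ l₂)) = g₁ (σ i m.prod) + g₂ (δ i m.prod) := by
  induction m with
  | nil =>
    intro u g₁ g₂ hg₁ _
    simpa [h1.σ_one, h1.δ_one] using hg₁ []
  | cons r m ih =>
    intro u g₁ g₂ hg₁ hg₂
    have h₁ := ih (u ++ [inr (σ i r)]) (g₁.comp (AddMonoidHom.mulLeft (σ i r)))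
      (g₂.comp (AddMonoidHom.mulLeft (σ i r))) (fun m' => by simpa using hg₁ (σ i r :: m'))
      (fun m' => by simpa using hg₂ (σ i r :: m'))
    have h₂ := hg₂ (δ i r :: m)
    simp only [List.append_assoc, List.cons_append, List.nil_append, List.map_cons] at h₁ h₂ ⊢
    have hrT : MemT (FreeMonoid.ofList (inr r :: (m.map inr ++ l₂))) :=
      memT_ofList_map_inr_append (r :: m) hT
    rw [hP.hList_xr u _ i r hrT, h₁, h₂]
    simp only [List.prod_cons, h1.σ_mul, h1.δ_mul, AddMonoidHom.comp_apply,
      AddMonoidHom.coe_mulLeft, map_add]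
    abel

theorem HasProdFactorization.inl_map_inr (hP : IsReduction σ δ c d a P) (h1 : Cond1 σ δ)
    {u l₂ : List (Ltr R n)} {i : Fin n} (ρ : List R) (hT : MemT (FreeMonoid.ofList l₂))
    (hx : HasProdFactorization P Q u (inl i :: l₂)) (h : HasProdFactorization P Q u l₂) :
    HasProdFactorization P Q (u ++ inl i :: ρ.map inr) l₂ := by
  obtain ⟨g₁, hg₁⟩ := hx
  obtain ⟨g₂, hg₂⟩ := h
  refine ⟨(g₁.comp (h1.σHom i) + g₂.comp (h1.δHom i)).comp
    (AddMonoidHom.mulLeft ρ.prod), fun m => ?_⟩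
  have := hList_inl_map_inr_append hP h1 hT i (ρ ++ m) u g₁ g₂ (fun m' => by simpa using hg₁ m')
    (fun m' => by simpa using hg₂ m')
  simpa using this

theorem HasProdFactorization.of_xr (hP : IsReduction σ δ c d a P) {l₁ m rest : List (Ltr R n)}
    {j : Fin n} {r : R} (hT : MemT (FreeMonoid.ofList (inr r :: rest)))
    (hσ : HasProdFactorization P Q l₁ (m ++ inr (σ j r) :: inl j :: rest))
    (hδ : HasProdFactorization P Q l₁ (m ++ inr (δ j r) :: rest)) :
    HasProdFactorization P Q l₁ (m ++ inl j :: inr r :: rest) := by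
  obtain ⟨g₁, hg₁⟩ := hσ
  obtain ⟨g₂, hg₂⟩ := hδ
  refine ⟨g₁ + g₂, fun m' => ?_⟩
  have := hP.hList_xr (Q := Q) (l₁ ++ m'.map inr ++ m) rest j r hT
  simp only [List.append_assoc] at this hg₁ hg₂ ⊢
  rw [this, hg₁, hg₂, AddMonoidHom.add_apply]

theorem HasProdFactorization.of_xx (hP : IsReduction σ δ c d a P) {l₁ m rest : List (Ltr R n)}
    {i j : Fin n} (hij : i < j) (hT : MemT (FreeMonoid.ofList (inl i :: rest)))
    (hc : HasProdFactorization P Q l₁ (m ++ inr (c i j) :: inl i :: inl j :: rest))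
    (ha : ∀ k, HasProdFactorization P Q l₁ (m ++ inr (a i j k) :: inl k :: rest))
    (hd : HasProdFactorization P Q l₁ (m ++ inr (d i j) :: rest)) :
    HasProdFactorization P Q l₁ (m ++ inl j :: inl i :: rest) := by
  obtain ⟨g₁, hg₁⟩ := hc
  choose g₂ hg₂ using ha
  obtain ⟨g₃, hg₃⟩ := hd
  refine ⟨g₁ + ∑ k, g₂ k + g₃, fun m' => ?_⟩
  have := hP.hList_xx (Q := Q) (l₁ ++ m'.map inr ++ m) rest hij hT
  simp only [List.append_assoc] at this hg₁ hg₂ hg₃ ⊢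
  simp [this, hg₁, hg₂, hg₃]

theorem hasProdFactorization (hP : IsReduction σ δ c d a P) (hQ : ∀ w, Q (wd w) = qWord w)
    (h1 : Cond1 σ δ) (l₁ l₂ : List (Ltr R n)) : HasProdFactorization P Q l₁ l₂ := by
  -- All words `l₁ m l₂` with `m` a single `R`-letter have the complexity of `l₁ 1 l₂`.
  induction hw : l₁ ++ inr 1 :: l₂ using wellFounded_complexityLT.induction generalizing l₁ l₂ with
  | _ w ih =>
  subst hw
  have ih' : ∀ l₁' l₂', ComplexityLT (l₁' ++ inr 1 :: l₂') (l₁ ++ inr 1 :: l₂) →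
      HasProdFactorization P Q l₁' l₂' := fun _ _ h => ih _ h _ _ rfl
  rcases exists_pivot l₂ with hT | ⟨m, j, r, rest, rfl, hT⟩ | ⟨m, j, i, rest, rfl, hij, hT⟩
  · rcases eq_map_inr_or_eq_append_inl_map_inr l₁ with ⟨ρ, rfl⟩ | ⟨u, i, ρ, rfl⟩
    · exact hasProdFactorization_map_inr_of_memT hP hQ ρ hT
    · refine .inl_map_inr hP h1 ρ hT (ih' _ _ ?_) (ih' _ _ ?_)
      · have := complexityLT_move u l₂ 1 i (ρ := ρ ++ [1]) (by simp)
        simpa only [List.map_append, List.map_cons, List.map_nil, List.append_assoc,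
          List.singleton_append, List.cons_append, List.nil_append] using this
      · exact complexityLT_of_length_lt (by simp [List.filterMap_cons, List.filterMap_map])
  · refine .of_xr hP hT (ih' _ _ ?_) (ih' _ _ ?_)
    · simpa using complexityLT_move (l₁ ++ inr 1 :: m) rest (σ j r) j (ρ := [r]) (by simp)
    · exact complexityLT_of_length_lt (by simp [List.filterMap_cons])
  · refine .of_xx hP hij hT (ih' _ _ ?_) (fun k => ih' _ _ ?_) (ih' _ _ ?_)
    · simpa using complexityLT_swap (l₁ ++ inr 1 :: m) rest (c i j) hij
    · exact complexityLT_of_length_lt (by simp [List.filterMap_cons])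
    · exact complexityLT_of_length_lt (by simp [List.filterMap_cons])

theorem Q_Pbar_wd_mul_wd_mul_wd_eq {Pbar : FreeAlg R n →ₗ[ℤ] FreeAlg R n}
    (hPbar : ∀ w, Pbar (wd w) = P w) (w₁ w w₂ : W R n) :
    Q (Pbar (wd w₁ * wd w * wd w₂)) = hList P Q (w₁.toList ++ w.toList ++ w₂.toList) := by
  simp only [wd, ← map_mul]
  rw [← wd, hPbar, hList]
  simp [mul_assoc]

theorem h_q_modulo_wd (hP : IsReduction σ δ c d a P) {Pbar : FreeAlg R n →ₗ[ℤ] FreeAlg R n}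
    (hPbar : ∀ w, Pbar (wd w) = P w) (hQ : ∀ w, Q (wd w) = qWord w) (h1 : Cond1 σ δ)
    (w₁ w₂ : W R n) {u : FreeAlg R n} (hu : u ∈ Submodule.span ℤ (wd '' {w : W R n | MemT w})) :
    Q (Pbar (wd w₁ * u * wd w₂)) = Q (Pbar (wd w₁ * tmap (Q u) * wd w₂)) := by
  choose g hg using fun x : Mon n =>
    hasProdFactorization hP hQ h1 w₁.toList (x.val.map inl ++ w₂.toList)
  have htmap : ∀ f, Q (Pbar (wd w₁ * tmap f * wd w₂)) = Finsupp.liftAddHom g f := by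
    intro f
    simp only [tmap, Finsupp.sum, Finset.mul_sum, Finset.sum_mul, map_sum,
      Finsupp.liftAddHom_apply, Q_Pbar_wd_mul_wd_mul_wd_eq hPbar]
    refine Finset.sum_congr rfl fun x _ => ?_
    simpa using hg x [f x]
  have hgen : ∀ w, MemT w → Q (Pbar (wd w₁ * wd w * wd w₂)) = Finsupp.liftAddHom g (Q (wd w)) := by
    intro w hw
    obtain ⟨ρ, xs, hxs, hnf⟩ := memT_ofList_iff.1 ((FreeMonoid.ofList_toList w).symm ▸ hw)
    have := hg ⟨xs, hxs⟩ ρ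
    rw [Q_Pbar_wd_mul_wd_mul_wd_eq hPbar, hQ, ← FreeMonoid.ofList_toList w, hnf,
      qWord_ofList_map_inr_append hxs]
    refine (?_ : _ = g ⟨xs, hxs⟩ ρ.prod).trans (Finsupp.liftAddHom_apply_single g _ _).symm
    simpa using this
  have hL : ∀ v, Q (Pbar (wd w₁ * v * wd w₂)) =
      (Q ∘ₗ Pbar ∘ₗ LinearMap.mulLeft ℤ (wd w₁) ∘ₗ LinearMap.mulRight ℤ (wd w₂)) v := by
    simp [mul_assoc]
  rw [htmap, hL]
  refine LinearMap.eqOn_span' (g := (Finsupp.liftAddHom g).toIntLinearMap ∘ₗ Q) ?_ hu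
  rintro _ ⟨w, hw, rfl⟩
  simpa [mul_assoc] using hgen w hw

end Reduction

theorem h_q_modulo_general {R : Type} [Ring R] {n : ℕ}
    (σ δ : Fin n → R → R) (c d : Fin n → Fin n → R) (a : Fin n → Fin n → Fin n → R)
    (P : W R n → FreeAlg R n) (Pbar : FreeAlg R n →ₗ[ℤ] FreeAlg R n)
    (Q : FreeAlg R n →ₗ[ℤ] FRMon R n)
    (hP : IsReduction σ δ c d a P) (hPbar : ∀ w, Pbar (wd w) = P w)
    (hQ : ∀ w, Q (wd w) = qWord w)
    (h1 : Cond1 σ δ)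
    (y z : FreeAlg R n) (u : FreeAlg R n)
    (hu : u ∈ Submodule.span ℤ (wd '' {w : W R n | MemT w})) :
    Q (Pbar (y * u * z)) = Q (Pbar (y * tmap (Q u) * z)) := by
  induction y using MonoidAlgebra.induction_on with
  | of w₁ =>
    induction z using MonoidAlgebra.induction_on with
    | of w₂ => exact h_q_modulo_wd hP hPbar hQ h1 w₁ w₂ hu
    | add z₁ z₂ ih₁ ih₂ => simp only [mul_add, map_add, ih₁, ih₂]
    | smul t z ih => simp only [mul_smul_comm, map_smul, ih]
  | add y₁ y₂ ih₁ ih₂ => simp only [add_mul, map_add, ih₁, ih₂]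
  | smul t y ih => simp only [smul_mul_assoc, map_smul, ih]

/-- Under conditions (1)–(3), for all `y, z ∈ ℤ⟨X ∪ R⟩` and all `a ∈ ℤT`,
`h(y a z) = h(y t(q(a)) z)`, where `h = q ∘ p̄`. -/
theorem h_q_modulo {R : Type} [Ring R] {n : ℕ}
    (σ δ : Fin n → R → R) (c d : Fin n → Fin n → R) (a : Fin n → Fin n → Fin n → R)
    (hσ : ∀ (i : Fin n) (r : R), r ≠ 0 → σ i r ≠ 0)
    (hc : ∀ i j : Fin n, i < j → ∃ u : R, u * c i j = 1)
    (P : W R n → FreeAlg R n) (Pbar : FreeAlg R n →ₗ[ℤ] FreeAlg R n)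
    (Q : FreeAlg R n →ₗ[ℤ] FRMon R n)
    (hP : IsReduction σ δ c d a P) (hPbar : ∀ w, Pbar (wd w) = P w)
    (hQ : ∀ w, Q (wd w) = qWord w)
    (h1 : Cond1 σ δ)
    (h2 : ∀ i j : Fin n, i < j → ∀ r : R,
      Q (P (xLtr j * xLtr i * rLtr r)) = Q (Pbar (P (xLtr j * xLtr i) * wd (rLtr r))))
    (h3 : ∀ i j k : Fin n, i < j → j < k →
      Q (P (xLtr k * xLtr j * xLtr i)) = Q (Pbar (P (xLtr k * xLtr j) * wd (xLtr i))))
    (y z : FreeAlg R n) (u : FreeAlg R n)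
    (hu : u ∈ Submodule.span ℤ (wd '' {w : W R n | MemT w})) :
    Q (Pbar (y * u * z)) = Q (Pbar (y * tmap (Q u) * z)) :=
  h_q_modulo_general σ δ c d a P Pbar Q hP hPbar hQ h1 y z u hu
end
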